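/- Let s > 11/2. There is a constant C = C(s) > 0 such that for all u, v ∈ H^s(𝕋) and all η, ρ ∈ H^{s-1}(𝕋): |(v ∂_x ρ − u ∂_x η, η − ρ)_{H^{s-3}}| ≤ C (‖v‖_{H^s} ‖η − ρ‖²_{H^{s-3}} + ‖η‖²_{H^{s-1}} ‖u − v‖²_{H^{s-3}} + ‖η − ρ‖²_{H^{s-3}}). -/

import Mathlib

noncomputable section
open scoped BigOperators

/-- A (complex-valued) function on the torus `𝕋 = ℝ/2πℤ`, represented by its sequence of
Fourier coefficients `f̂ : ℤ → ℂ`. -/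
abbrev FC := ℤ → ℂ

namespace FC

/-- The Sobolev weight `(1+k²)^s`. -/
def wt (s : ℝ) (k : ℤ) : ℝ := (1 + (k : ℝ) ^ 2) ^ s

/-- `c` represents a function belonging to the Sobolev space `H^s(𝕋)`. -/
def memHs (s : ℝ) (c : FC) : Prop := Summable fun k : ℤ => wt s k * ‖c k‖ ^ 2

/-- The `H^s(𝕋)` norm: `‖f‖²_{H^s} = Σ_{k∈ℤ} (1+k²)^s |f̂(k)|²`. -/
def hsNorm (s : ℝ) (c : FC) : ℝ := Real.sqrt (∑' k : ℤ, wt s k * ‖c k‖ ^ 2)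

/-- The `H^s(𝕋)` inner product `(f,g)_{H^s} = Σ_{k∈ℤ} (1+k²)^s f̂(k) conj(ĝ(k))`
(its real part; the sum is real for real-valued functions). -/
def hsInner (s : ℝ) (c d : FC) : ℝ :=
  (∑' k : ℤ, ((wt s k : ℂ) * (c k * (starRingEnd ℂ) (d k)))).re

/-- `c` represents a real-valued function (conjugate-symmetric coefficients). -/
def isReal (c : FC) : Prop := ∀ k : ℤ, c (-k) = (starRingEnd ℂ) (c k)

/-- The derivative `∂ₓ`, i.e. the Fourier multiplier `ik`. -/
def D1 (c : FC) : FC := fun k => Complex.I * (k : ℂ) * c k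

/-- The pointwise product of functions, i.e. convolution of Fourier coefficients. -/
def mul (c d : FC) : FC := fun k => ∑' j : ℤ, c j * d (k - j)

/-- The represented function, evaluated at `x ∈ ℝ`. -/
def eval (c : FC) (x : ℝ) : ℂ := ∑' k : ℤ, c k * Complex.exp (Complex.I * (k : ℂ) * (x : ℂ))

/-- The `L^∞` norm (supremum of the represented periodic function over ℝ). -/
def linfty (c : FC) : ℝ := ⨆ x : ℝ, ‖eval c x‖

/-- The `W^{1,∞}` norm. -/
def w1infty (c : FC) : ℝ := linfty c + linfty (D1 c)

/-- A Fourier multiplier operator with real symbol `m`. -/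
def mult (m : ℤ → ℝ) (c : FC) : FC := fun k => (m k : ℂ) * c k

/-- The operator `(1-∂ₓ²)⁻¹`, i.e. the Fourier multiplier `(1+k²)⁻¹`. -/
def helmInv : FC → FC := mult fun k => (1 + (k : ℝ) ^ 2)⁻¹

/-- The operator `1-∂ₓ²`, i.e. the Fourier multiplier `1+k²`. -/
def helm : FC → FC := mult fun k => 1 + (k : ℝ) ^ 2

/-- The operator `T̃_ε = (1-ε²∂ₓ²)⁻¹`, i.e. the Fourier multiplier `(1+ε²k²)⁻¹`. -/
def T (ε : ℝ) : FC → FC := mult fun k => (1 + ε ^ 2 * (k : ℝ) ^ 2)⁻¹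

/-- The periodic Hilbert transform, i.e. the Fourier multiplier `-i·sgn(k)`. -/
def hilbert (c : FC) : FC := fun k => -Complex.I * (Int.sign k : ℂ) * c k

/-- The Friedrichs-type mollifier `J_ε`, the Fourier multiplier `ĵ(εk)`. -/
def Jmol (jhat : ℝ → ℝ) (ε : ℝ) : FC → FC := mult fun k => jhat (ε * (k : ℝ))

/-- The generalized Lie derivative `𝓛_ξ f = ξ ∂ₓ f + (∂ₓ ξ) f`. -/
def lie (ξ c : FC) : FC := mul ξ (D1 c) + mul (D1 ξ) c

/-- `𝓛²_ξ f = 𝓛_ξ (𝓛_ξ f)`. -/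
def lie2 (ξ c : FC) : FC := lie ξ (lie ξ c)

/-- The coefficientwise sum `Σ_{k∈ℕ} F k` of a sequence of functions. -/
def tsumFC (F : ℕ → FC) : FC := fun m => ∑' k : ℕ, F k m

/-- The norm on the product space `H^{s₁}×H^{s₂}`. -/
def pairNorm (s₁ s₂ : ℝ) (c d : FC) : ℝ := Real.sqrt (hsNorm s₁ c ^ 2 + hsNorm s₂ d ^ 2)

/-- The inner product on the product space `H^{s₁}×H^{s₂}`:
`((c₁,d₁),(c₂,d₂)) ↦ (c₁,c₂)_{H^{s₁}} + (d₁,d₂)_{H^{s₂}}`. -/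
def pairInner (s₁ s₂ : ℝ) (c₁ d₁ c₂ d₂ : FC) : ℝ := hsInner s₁ c₁ c₂ + hsInner s₂ d₁ d₂

end FC

/-!
Put `t = s - 3`, `w = η - ρ` and `⟨k⟩² = 1 + k²`, so that `wt t k = ⟨k⟩^{2t}`. The integrand
splits as `v ∂ₓρ - u ∂ₓη = -v ∂ₓw - (u - v) ∂ₓη`, and in Fourier variables both pairings are
double series over `(k, j)`. By Peetre's inequality their kernels are dominated by products
`b(k - j) x(j) y(k)` with `x, y` the weighted coefficients of `H^t` functions and `b ∈ ℓ¹`, so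
Schur's test bounds them by `‖b‖_{ℓ¹} ‖x‖_{ℓ²} ‖y‖_{ℓ²}`, and `‖b‖_{ℓ¹} ≲ ‖·‖_{H^{t+2}}` by
Cauchy–Schwarz. Taken naively, `(v ∂ₓw, w)_{H^t}` would cost a derivative of `w`; since `v` is
real, symmetrising the double series in `(k, j)` replaces the symbol `j ⟨k⟩^{2t}` by its
antisymmetric part `j ⟨k⟩^{2t} - k ⟨j⟩^{2t}`, which is `O(|k - j| max(⟨k⟩, ⟨j⟩)^{2t})` by the
mean value theorem. The cross term `‖η‖ ‖u - v‖ ‖w‖` is split by AM–GM.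
-/

section

open Real

lemma rpow_sub_rpow_le_mul {t a b : ℝ} (ht : 1 ≤ t) (hb : 0 < b) (hab : b ≤ a) :
    a ^ t - b ^ t ≤ t * (a - b) * a ^ (t - 1) := by
  have ha : 0 < a := hb.trans_le hab
  have hx : -1 ≤ (b - a) / a := by rw [le_div_iff₀ ha]; linarith
  have hbern := one_add_mul_self_le_rpow_one_add hx ht
  rw [show 1 + (b - a) / a = b / a by field_simp; ring, div_rpow hb.le ha.le,
    le_div_iff₀ (rpow_pos_of_pos ha t)] at hbern
  have h : (1 + t * ((b - a) / a)) * a ^ t = a ^ t + t * (b - a) * a ^ (t - 1) := by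
    rw [rpow_sub ha, rpow_one]
    field_simp
  linarith

lemma summable_and_tsum_mul_le_sqrt {ι : Type*} {f g : ι → ℝ} (hf0 : ∀ i, 0 ≤ f i)
    (hg0 : ∀ i, 0 ≤ g i) (hf : Summable fun i => f i ^ 2) (hg : Summable fun i => g i ^ 2) :
    Summable (fun i => f i * g i) ∧
      ∑' i, f i * g i ≤ √(∑' i, f i ^ 2) * √(∑' i, g i ^ 2) := by
  simpa [sqrt_eq_rpow] using summable_and_inner_le_Lp_mul_Lq_tsum_of_nonneg
    Real.HolderConjugate.two_two hf0 hg0 (by simpa using hf) (by simpa using hg)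

lemma hasSum_conv_right {b x : ℤ → ℝ} (hb0 : ∀ i, 0 ≤ b i) (hx0 : ∀ i, 0 ≤ x i)
    (hb : Summable b) (hx : Summable x) :
    HasSum (fun p : ℤ × ℤ => b (p.1 - p.2) * x p.2) ((∑' i, b i) * ∑' i, x i) := by
  let e : ℤ × ℤ ≃ ℤ × ℤ :=
    ⟨fun p => (p.1 + p.2, p.2), fun p => (p.1 - p.2, p.2), fun p => by simp, fun p => by simp⟩
  have he : (fun p : ℤ × ℤ => b (p.1 - p.2) * x p.2) ∘ e = fun p => b p.1 * x p.2 := by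
    funext p; simp [e]
  rw [← e.hasSum_iff, he]
  exact hb.hasSum.mul hx.hasSum (hb.mul_of_nonneg hx hb0 hx0)

lemma hasSum_conv_left {b y : ℤ → ℝ} (hb0 : ∀ i, 0 ≤ b i) (hy0 : ∀ i, 0 ≤ y i)
    (hb : Summable b) (hy : Summable y) :
    HasSum (fun p : ℤ × ℤ => b (p.1 - p.2) * y p.1) ((∑' i, b i) * ∑' i, y i) := by
  let e : ℤ × ℤ ≃ ℤ × ℤ :=
    ⟨fun p => (p.2, p.2 - p.1), fun p => (p.1 - p.2, p.1), fun p => by simp, fun p => by simp⟩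
  have he : (fun p : ℤ × ℤ => b (p.1 - p.2) * y p.1) ∘ e = fun p => b p.1 * y p.2 := by
    funext p; simp [e]
  rw [← e.hasSum_iff, he]
  exact hb.hasSum.mul hy.hasSum (hb.mul_of_nonneg hy hb0 hy0)

/-- Schur's test for the convolution kernel `b (k - j)`: the bilinear form it defines on `ℓ²`
has norm at most `‖b‖_{ℓ¹}`. -/
lemma summable_and_tsum_conv_le {b x y : ℤ → ℝ} (hb0 : ∀ i, 0 ≤ b i) (hx0 : ∀ i, 0 ≤ x i)
    (hy0 : ∀ i, 0 ≤ y i) (hb : Summable b) (hx : Summable fun i => x i ^ 2)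
    (hy : Summable fun i => y i ^ 2) :
    Summable (fun p : ℤ × ℤ => b (p.1 - p.2) * x p.2 * y p.1) ∧
      ∑' p : ℤ × ℤ, b (p.1 - p.2) * x p.2 * y p.1
        ≤ (∑' i, b i) * (√(∑' i, x i ^ 2) * √(∑' i, y i ^ 2)) := by
  have hsq : ∀ p : ℤ × ℤ, ∀ z : ℝ, (√(b (p.1 - p.2)) * z) ^ 2 = b (p.1 - p.2) * z ^ 2 :=
    fun p z => by rw [mul_pow, sq_sqrt (hb0 _)]
  have hX := hasSum_conv_right hb0 (fun i => sq_nonneg (x i)) hb hx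
  have hY := hasSum_conv_left hb0 (fun i => sq_nonneg (y i)) hb hy
  have hfg : ∀ p : ℤ × ℤ, √(b (p.1 - p.2)) * x p.2 * (√(b (p.1 - p.2)) * y p.1)
      = b (p.1 - p.2) * x p.2 * y p.1 := fun p => by
    rw [mul_mul_mul_comm, mul_self_sqrt (hb0 _), mul_assoc]
  obtain ⟨hsum, hle⟩ := summable_and_tsum_mul_le_sqrt
    (f := fun p : ℤ × ℤ => √(b (p.1 - p.2)) * x p.2)
    (g := fun p : ℤ × ℤ => √(b (p.1 - p.2)) * y p.1)
    (fun p => mul_nonneg (sqrt_nonneg _) (hx0 _)) (fun p => mul_nonneg (sqrt_nonneg _) (hy0 _))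
    (hX.summable.congr fun p => (hsq p _).symm) (hY.summable.congr fun p => (hsq p _).symm)
  refine ⟨hsum.congr hfg, (tsum_congr hfg).symm.trans_le (hle.trans_eq ?_)⟩
  have hB : 0 ≤ ∑' i, b i := tsum_nonneg hb0
  simp only [hsq, hX.tsum_eq, hY.tsum_eq, sqrt_mul hB]
  rw [mul_mul_mul_comm, mul_self_sqrt hB]

lemma abs_neg_sub_le_of_abs_le {A B a b N₁ N₂ N₃ N₄ : ℝ} (ha : 0 ≤ a) (hb : 0 ≤ b)
    (hN₁ : 0 ≤ N₁) (hA : |A| ≤ a * N₁ * (N₄ * N₄)) (hB : |B| ≤ b * N₂ * (N₃ * N₄)) :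
    |-A - B| ≤ (a + b + 1) * (N₁ * N₄ ^ 2 + N₂ ^ 2 * N₃ ^ 2 + N₄ ^ 2) := by
  have hamgm : N₂ * (N₃ * N₄) ≤ (N₂ ^ 2 * N₃ ^ 2 + N₄ ^ 2) / 2 := by
    nlinarith [sq_nonneg (N₂ * N₃ - N₄)]
  have habs : |-A - B| ≤ |A| + |B| := (abs_sub _ _).trans_eq (by rw [abs_neg])
  have hX : 0 ≤ N₁ * N₄ ^ 2 := mul_nonneg hN₁ (sq_nonneg _)
  have hY : 0 ≤ N₂ ^ 2 * N₃ ^ 2 := mul_nonneg (sq_nonneg _) (sq_nonneg _)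
  nlinarith [mul_le_mul_of_nonneg_left hamgm hb, mul_nonneg (add_nonneg hb zero_le_one) hX,
    mul_nonneg (add_nonneg ha zero_le_one) hY, mul_nonneg (add_nonneg ha zero_le_one) (sq_nonneg N₄)]

end

namespace FC

open Real

lemma one_add_sq_pos (k : ℤ) : (0 : ℝ) < 1 + (k : ℝ) ^ 2 := by positivity

lemma wt_nonneg (s : ℝ) (k : ℤ) : 0 ≤ wt s k := rpow_nonneg (one_add_sq_pos k).le s

lemma wt_add (a b : ℝ) (k : ℤ) : wt (a + b) k = wt a k * wt b k :=
  rpow_add (one_add_sq_pos k) a b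

lemma wt_half_mul_self (t : ℝ) (k : ℤ) : wt (t / 2) k * wt (t / 2) k = wt t k := by
  rw [← wt_add, add_halves]

lemma wt_one (k : ℤ) : wt 1 k = 1 + (k : ℝ) ^ 2 := rpow_one _

lemma wt_neg (s : ℝ) (k : ℤ) : wt s (-k) = wt s k := by simp [wt]

lemma wt_mono {a b : ℝ} (h : a ≤ b) (k : ℤ) : wt a k ≤ wt b k :=
  rpow_le_rpow_of_exponent_le (le_add_of_nonneg_right (sq_nonneg _)) h

lemma abs_le_wt_half (k : ℤ) : |(k : ℝ)| ≤ wt (1 / 2) k := by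
  rw [wt, ← sqrt_eq_rpow, ← sqrt_sq_eq_abs]
  exact sqrt_le_sqrt (by linarith)

/-- Peetre's inequality. -/
lemma wt_le_two_rpow_mul {σ : ℝ} (hσ : 0 ≤ σ) (k j : ℤ) :
    wt σ k ≤ 2 ^ σ * (wt σ j * wt σ (k - j)) := by
  have h : (1 : ℝ) + (k : ℝ) ^ 2 ≤ 2 * ((1 + (j : ℝ) ^ 2) * (1 + ((k - j : ℤ) : ℝ) ^ 2)) := by
    push_cast
    nlinarith [sq_nonneg ((j : ℝ) - (k - j)), sq_nonneg ((j : ℝ) * (k - j))]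
  calc wt σ k ≤ (2 * ((1 + (j : ℝ) ^ 2) * (1 + ((k - j : ℤ) : ℝ) ^ 2))) ^ σ :=
        rpow_le_rpow (one_add_sq_pos k).le h hσ
    _ = 2 ^ σ * (wt σ j * wt σ (k - j)) := by
        rw [mul_rpow zero_le_two (by positivity), mul_rpow (by positivity) (by positivity)]
        rfl

lemma wt_le_two_rpow_half_mul {t : ℝ} (ht : 0 ≤ t) (k j : ℤ) :
    wt t k ≤ 2 ^ (t / 2) * (wt (t / 2) (k - j) * (wt (t / 2) j * wt (t / 2) k)) := by
  calc wt t k = wt (t / 2) k * wt (t / 2) k := (wt_half_mul_self t k).symm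
    _ ≤ 2 ^ (t / 2) * (wt (t / 2) j * wt (t / 2) (k - j)) * wt (t / 2) k :=
        mul_le_mul_of_nonneg_right (wt_le_two_rpow_mul (by linarith) k j) (wt_nonneg _ _)
    _ = _ := by ring

lemma abs_mul_wt_sub_mul_wt_le_of_sq_le {t : ℝ} (ht : 1 ≤ t) {k j : ℤ}
    (hjk : (j : ℝ) ^ 2 ≤ (k : ℝ) ^ 2) :
    |(j : ℝ) * wt t k - k * wt t j| ≤ (2 * t + 1) * |(k : ℝ) - j| * wt t k := by
  have hmono : wt t j ≤ wt t k := rpow_le_rpow (one_add_sq_pos j).le (by linarith) (by linarith)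
  have hdiff : wt t k - wt t j ≤ t * ((k : ℝ) ^ 2 - j ^ 2) * wt (t - 1) k := by
    have := rpow_sub_rpow_le_mul ht (one_add_sq_pos j) (by linarith : 1 + (j : ℝ) ^ 2 ≤ 1 + k ^ 2)
    rw [wt, wt, wt]
    linarith
  have habs : |(j : ℝ)| ≤ |(k : ℝ)| := sq_le_sq.1 hjk
  have hfactor : |(j : ℝ)| * ((k : ℝ) ^ 2 - j ^ 2) ≤ |(k : ℝ) - j| * (2 * (1 + (k : ℝ) ^ 2)) := by
    have hprod : (k : ℝ) ^ 2 - j ^ 2 ≤ |(k : ℝ) - j| * |(k : ℝ) + j| := by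
      rw [← abs_mul]; exact (le_abs_self _).trans_eq' (by ring)
    have hjsum : |(j : ℝ)| * |(k : ℝ) + j| ≤ 2 * (1 + (k : ℝ) ^ 2) := by
      have := abs_add_le (k : ℝ) j
      nlinarith [sq_abs (k : ℝ), abs_nonneg (j : ℝ), abs_nonneg (k : ℝ)]
    calc |(j : ℝ)| * ((k : ℝ) ^ 2 - j ^ 2) ≤ |(j : ℝ)| * (|(k : ℝ) - j| * |(k : ℝ) + j|) :=
          mul_le_mul_of_nonneg_left hprod (abs_nonneg _)
      _ = |(k : ℝ) - j| * (|(j : ℝ)| * |(k : ℝ) + j|) := by ring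
      _ ≤ _ := mul_le_mul_of_nonneg_left hjsum (abs_nonneg _)
  have hfirst : |(j : ℝ)| * (wt t k - wt t j) ≤ 2 * t * |(k : ℝ) - j| * wt t k := by
    calc |(j : ℝ)| * (wt t k - wt t j)
        ≤ |(j : ℝ)| * (t * ((k : ℝ) ^ 2 - j ^ 2) * wt (t - 1) k) :=
          mul_le_mul_of_nonneg_left hdiff (abs_nonneg _)
      _ = t * wt (t - 1) k * (|(j : ℝ)| * ((k : ℝ) ^ 2 - j ^ 2)) := by ring
      _ ≤ t * wt (t - 1) k * (|(k : ℝ) - j| * (2 * (1 + (k : ℝ) ^ 2))) :=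
          mul_le_mul_of_nonneg_left hfactor (mul_nonneg (by linarith) (wt_nonneg _ _))
      _ = 2 * t * |(k : ℝ) - j| * ((1 + (k : ℝ) ^ 2) * wt (t - 1) k) := by ring
      _ = 2 * t * |(k : ℝ) - j| * wt t k := by rw [← wt_one, ← wt_add, add_sub_cancel]
  calc |(j : ℝ) * wt t k - k * wt t j|
      = |j * (wt t k - wt t j) + (j - k) * wt t j| := by ring_nf
    _ ≤ |(j : ℝ)| * (wt t k - wt t j) + |(k : ℝ) - j| * wt t j := by
        refine (abs_add_le _ _).trans_eq ?_
        rw [abs_mul, abs_mul, abs_of_nonneg (sub_nonneg.2 hmono), abs_of_nonneg (wt_nonneg t j),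
          abs_sub_comm]
    _ ≤ 2 * t * |(k : ℝ) - j| * wt t k + |(k : ℝ) - j| * wt t k := by
        gcongr
    _ = (2 * t + 1) * |(k : ℝ) - j| * wt t k := by ring

lemma abs_mul_wt_sub_mul_wt_le {t : ℝ} (ht : 1 ≤ t) (k j : ℤ) :
    |(j : ℝ) * wt t k - k * wt t j|
      ≤ (2 * t + 1) * 2 ^ (t / 2) * (wt ((t + 1) / 2) (k - j) * (wt (t / 2) j * wt (t / 2) k)) := by
  have hker : ∀ k j : ℤ, |(k : ℝ) - j| * wt t k
      ≤ 2 ^ (t / 2) * (wt ((t + 1) / 2) (k - j) * (wt (t / 2) j * wt (t / 2) k)) := by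
    intro k j
    calc |(k : ℝ) - j| * wt t k
        ≤ wt (1 / 2) (k - j)
            * (2 ^ (t / 2) * (wt (t / 2) (k - j) * (wt (t / 2) j * wt (t / 2) k))) :=
          mul_le_mul (by exact_mod_cast abs_le_wt_half (k - j))
            (wt_le_two_rpow_half_mul (by linarith) k j) (wt_nonneg _ _) (wt_nonneg _ _)
      _ = _ := by rw [show (t + 1) / 2 = 1 / 2 + t / 2 by ring, wt_add]; ring
  rcases le_total ((j : ℝ) ^ 2) ((k : ℝ) ^ 2) with h | h
  · refine (abs_mul_wt_sub_mul_wt_le_of_sq_le ht h).trans ?_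
    rw [mul_assoc (2 * t + 1), mul_assoc (2 * t + 1)]
    exact mul_le_mul_of_nonneg_left (hker k j) (by linarith)
  · calc |(j : ℝ) * wt t k - k * wt t j| = |(k : ℝ) * wt t j - j * wt t k| := abs_sub_comm _ _
      _ ≤ (2 * t + 1) * (|(j : ℝ) - k| * wt t j) := by
          rw [← mul_assoc]; exact abs_mul_wt_sub_mul_wt_le_of_sq_le ht h
      _ ≤ (2 * t + 1)
            * (2 ^ (t / 2) * (wt ((t + 1) / 2) (j - k) * (wt (t / 2) k * wt (t / 2) j))) :=
          mul_le_mul_of_nonneg_left (hker j k) (by linarith)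
      _ = _ := by rw [← neg_sub, wt_neg]; ring

lemma summable_wt_neg_one : Summable (wt (-1)) := by
  refine ((summable_one_div_int_pow.2 one_lt_two).mul_left 2).of_norm_bounded_eventually ?_
  filter_upwards [Filter.eventually_cofinite_ne 0] with k hk
  have hk2 : (1 : ℝ) ≤ (k : ℝ) ^ 2 := by
    have : (1 : ℝ) ≤ |(k : ℝ)| := by exact_mod_cast Int.one_le_abs hk
    nlinarith [sq_abs (k : ℝ)]
  rw [norm_of_nonneg (wt_nonneg _ _), wt, rpow_neg_one, one_div, ← div_eq_mul_inv,
    inv_le_iff_one_le_mul₀ (one_add_sq_pos k), div_mul_eq_mul_div, le_div_iff₀ (by positivity)]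
  linarith

/-- A bound for the norm of the embedding `H^{2τ+1} ↪ ℓ¹(⟨k⟩^{2τ})`. -/
def embConst : ℝ := √(∑' k, wt (-1) k)

lemma embConst_nonneg : 0 ≤ embConst := sqrt_nonneg _

lemma memHs.mono {σ σ' : ℝ} {c : FC} (hc : memHs σ c) (h : σ' ≤ σ) : memHs σ' c :=
  hc.of_nonneg_of_le (fun _ => mul_nonneg (wt_nonneg _ _) (sq_nonneg _))
    fun k => mul_le_mul_of_nonneg_right (wt_mono h k) (sq_nonneg _)

lemma memHs.sub {σ : ℝ} {c d : FC} (hc : memHs σ c) (hd : memHs σ d) : memHs σ (c - d) := by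
  refine ((hc.add hd).mul_left 2).of_nonneg_of_le
    (fun k => mul_nonneg (wt_nonneg _ _) (sq_nonneg _)) fun k => ?_
  have h : ‖(c - d) k‖ ^ 2 ≤ 2 * ‖c k‖ ^ 2 + 2 * ‖d k‖ ^ 2 := by
    have := norm_sub_le (c k) (d k)
    rw [Pi.sub_apply]
    nlinarith [sq_nonneg (‖c k‖ - ‖d k‖), norm_nonneg (c k - d k)]
  nlinarith [mul_le_mul_of_nonneg_left h (wt_nonneg σ k)]

lemma memHs.summable_sq {c : FC} (hc : memHs 0 c) : Summable fun k => ‖c k‖ ^ 2 := by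
  simpa [memHs, wt] using hc

lemma norm_D1 (c : FC) (k : ℤ) : ‖D1 c k‖ = |(k : ℝ)| * ‖c k‖ := by simp [D1]

lemma memHs.D1 {σ : ℝ} {c : FC} (hc : memHs (σ + 1) c) : memHs σ (D1 c) := by
  refine hc.of_nonneg_of_le (fun k => mul_nonneg (wt_nonneg _ _) (sq_nonneg _)) fun k => ?_
  rw [norm_D1, mul_pow, sq_abs, ← mul_assoc, wt_add, wt_one]
  gcongr
  · exact wt_nonneg _ _
  · linarith

lemma hsNorm_nonneg (σ : ℝ) (c : FC) : 0 ≤ hsNorm σ c := sqrt_nonneg _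

lemma hsNorm_mono {σ σ' : ℝ} {c : FC} (hc : memHs σ c) (h : σ' ≤ σ) :
    hsNorm σ' c ≤ hsNorm σ c :=
  sqrt_le_sqrt <| (hc.mono h).tsum_le_tsum
    (fun k => mul_le_mul_of_nonneg_right (wt_mono h k) (sq_nonneg _)) hc

def weightedAbs (τ : ℝ) (c : FC) (k : ℤ) : ℝ := wt τ k * ‖c k‖

lemma weightedAbs_nonneg (τ : ℝ) (c : FC) (k : ℤ) : 0 ≤ weightedAbs τ c k :=
  mul_nonneg (wt_nonneg _ _) (norm_nonneg _)

lemma weightedAbs_sq (τ : ℝ) (c : FC) (k : ℤ) :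
    weightedAbs τ c k ^ 2 = wt (2 * τ) k * ‖c k‖ ^ 2 := by
  rw [weightedAbs, mul_pow, two_mul, wt_add, sq]

lemma weightedAbs_D1_le (τ : ℝ) (c : FC) (k : ℤ) :
    weightedAbs τ (D1 c) k ≤ weightedAbs (τ + 1 / 2) c k := by
  rw [weightedAbs, weightedAbs, norm_D1, wt_add, mul_assoc, mul_comm (wt _ k)]
  exact mul_le_mul_of_nonneg_right (mul_le_mul_of_nonneg_right (abs_le_wt_half k)
    (norm_nonneg _)) (wt_nonneg _ _) |>.trans_eq (by ring)

lemma memHs.summable_weightedAbs_sq {σ τ : ℝ} {c : FC} (hc : memHs σ c) (h : 2 * τ ≤ σ) :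
    Summable fun k => weightedAbs τ c k ^ 2 :=
  (hc.mono h).congr fun k => (weightedAbs_sq τ c k).symm

lemma sqrt_tsum_weightedAbs_sq_le {σ τ : ℝ} {c : FC} (hc : memHs σ c) (h : 2 * τ ≤ σ) :
    √(∑' k, weightedAbs τ c k ^ 2) ≤ hsNorm σ c := by
  simp only [weightedAbs_sq]
  exact hsNorm_mono hc h

lemma summable_and_tsum_weightedAbs_le {σ τ : ℝ} {c : FC} (hc : memHs σ c) (h : 2 * τ + 1 ≤ σ) :
    Summable (weightedAbs τ c) ∧ ∑' k, weightedAbs τ c k ≤ embConst * hsNorm σ c := by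
  have hsplit : ∀ k, wt (-1 / 2) k * weightedAbs (τ + 1 / 2) c k = weightedAbs τ c k := by
    intro k
    rw [weightedAbs, weightedAbs, ← mul_assoc, ← wt_add]
    ring_nf
  have hhalf : ∀ k, wt (-1 / 2) k ^ 2 = wt (-1) k := by
    intro k; rw [sq, ← wt_add]; norm_num
  obtain ⟨hsum, hle⟩ := summable_and_tsum_mul_le_sqrt (fun k => wt_nonneg (-1 / 2) k)
    (weightedAbs_nonneg (τ + 1 / 2) c) (summable_wt_neg_one.congr fun k => (hhalf k).symm)
    (hc.summable_weightedAbs_sq (by linarith))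
  refine ⟨hsum.congr hsplit, (tsum_congr hsplit).symm.trans_le (hle.trans ?_)⟩
  rw [tsum_congr hhalf]
  exact mul_le_mul_of_nonneg_left (sqrt_tsum_weightedAbs_sq_le hc (by linarith)) (sqrt_nonneg _)

protected lemma mul_comm (c d : FC) : mul c d = mul d c := by
  funext k
  rw [mul, mul, ← (Equiv.subLeft k).tsum_eq]
  simp [Equiv.subLeft_apply, _root_.mul_comm]

lemma summable_mul_apply_sub {c d : FC} (hc : memHs 0 c) (hd : memHs 0 d) (k : ℤ) :
    Summable fun j => c j * d (k - j) := by
  have hd' : Summable fun j => ‖d (k - j)‖ ^ 2 :=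
    (Equiv.subLeft k).summable_iff.2 hd.summable_sq
  refine Summable.of_norm (((hc.summable_sq.add hd').div_const 2).of_nonneg_of_le
    (fun j => norm_nonneg _) fun j => ?_)
  rw [norm_mul]
  nlinarith [sq_nonneg (‖c j‖ - ‖d (k - j)‖)]

lemma mul_D1_sub_mul_D1 {u v η ρ : FC} (hu : memHs 0 u) (hv : memHs 0 v) (hη : memHs 1 η)
    (hρ : memHs 1 ρ) :
    mul v (D1 ρ) - mul u (D1 η) = -mul v (D1 (η - ρ)) - mul (u - v) (D1 η) := by
  funext k
  have hDη : memHs 0 (D1 η) := (hη.mono (by norm_num)).D1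
  have hDρ : memHs 0 (D1 ρ) := (hρ.mono (by norm_num)).D1
  have hDw : D1 (η - ρ) = D1 η - D1 ρ := by funext j; simp [D1, mul_sub]
  have hw : Summable fun j => -(v j * (D1 η (k - j) - D1 ρ (k - j))) :=
    (summable_mul_apply_sub hv (hDη.sub hDρ) k).neg
  have huv : Summable fun j => (u j - v j) * D1 η (k - j) :=
    summable_mul_apply_sub (hu.sub hv) hDη k
  simp only [Pi.sub_apply, Pi.neg_apply, mul, hDw]
  rw [← (summable_mul_apply_sub hv hDρ k).tsum_sub (summable_mul_apply_sub hu hDη k), ← tsum_neg,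
    ← hw.tsum_sub huv]
  congr 1
  funext j
  ring

lemma hsInner_neg_sub {t : ℝ} {c d w : FC}
    (hc : Summable fun k => (wt t k : ℂ) * (c k * starRingEnd ℂ (w k)))
    (hd : Summable fun k => (wt t k : ℂ) * (d k * starRingEnd ℂ (w k))) :
    hsInner t (-c - d) w = -hsInner t c w - hsInner t d w := by
  have h : ∀ k, (wt t k : ℂ) * ((-c - d) k * starRingEnd ℂ (w k))
      = -((wt t k : ℂ) * (c k * starRingEnd ℂ (w k)))
        - (wt t k : ℂ) * (d k * starRingEnd ℂ (w k)) :=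
    fun k => by simp only [Pi.sub_apply, Pi.neg_apply]; ring
  rw [hsInner, tsum_congr h, hc.neg.tsum_sub hd, tsum_neg, Complex.sub_re, Complex.neg_re]
  rfl

/-- `(a b, w)_{H^t}` as a double series: `p = (k, j)`, with `k` the frequency of `w` and `j` that
of `a`. -/
def innerMulTerm (t : ℝ) (a b w : FC) (p : ℤ × ℤ) : ℂ :=
  (wt t p.1 : ℂ) * (a p.2 * b (p.1 - p.2) * starRingEnd ℂ (w p.1))

lemma hasSum_of_summable_innerMulTerm {t : ℝ} {a b w : FC}
    (h : Summable (innerMulTerm t a b w)) :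
    HasSum (fun k => (wt t k : ℂ) * (mul a b k * starRingEnd ℂ (w k)))
      (∑' p, innerMulTerm t a b w p) :=
  h.hasSum.prod_fiberwise fun k => by
    have hk : (wt t k : ℂ) * (mul a b k * starRingEnd ℂ (w k))
        = ∑' j, innerMulTerm t a b w (k, j) := by
      simp only [innerMulTerm, mul, tsum_mul_left, tsum_mul_right]
    exact hk ▸ (h.prod_factor k).hasSum

lemma norm_innerMulTerm_le {t : ℝ} (ht : 0 ≤ t) (a b w : FC) (p : ℤ × ℤ) :
    ‖innerMulTerm t a b w p‖ ≤ 2 ^ (t / 2) * (weightedAbs (t / 2) b (p.1 - p.2)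
      * weightedAbs (t / 2) a p.2 * weightedAbs (t / 2) w p.1) := by
  have hnorm : ‖innerMulTerm t a b w p‖
      = wt t p.1 * (‖a p.2‖ * ‖b (p.1 - p.2)‖ * ‖w p.1‖) := by
    simp [innerMulTerm, abs_of_nonneg (wt_nonneg t p.1)]
  rw [hnorm]
  refine (mul_le_mul_of_nonneg_right (wt_le_two_rpow_half_mul ht p.1 p.2)
    (by positivity)).trans_eq ?_
  simp only [weightedAbs]
  ring

lemma summable_and_norm_tsum_le_of_norm_le {F : ℤ × ℤ → ℂ} {K t σ τ : ℝ} {a b w : FC}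
    (hK : 0 ≤ K) (hb : memHs σ b) (hτ : 2 * τ + 1 ≤ σ) (ha : memHs t a) (hw : memHs t w)
    (hF : ∀ p : ℤ × ℤ, ‖F p‖ ≤ K * (weightedAbs τ b (p.1 - p.2) * weightedAbs (t / 2) a p.2
      * weightedAbs (t / 2) w p.1)) :
    Summable F ∧ ‖∑' p, F p‖ ≤ K * embConst * hsNorm σ b * (hsNorm t a * hsNorm t w) := by
  obtain ⟨hb1, hb1le⟩ := summable_and_tsum_weightedAbs_le hb hτ
  obtain ⟨hG, hGle⟩ := summable_and_tsum_conv_le (weightedAbs_nonneg τ b)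
    (weightedAbs_nonneg (t / 2) a) (weightedAbs_nonneg (t / 2) w) hb1
    (ha.summable_weightedAbs_sq (by linarith)) (hw.summable_weightedAbs_sq (by linarith))
  have hG' := hG.mul_left K
  refine ⟨hG'.of_norm_bounded hF, ?_⟩
  calc ‖∑' p, F p‖ ≤ ∑' p : ℤ × ℤ, K * (weightedAbs τ b (p.1 - p.2) * weightedAbs (t / 2) a p.2
        * weightedAbs (t / 2) w p.1) := tsum_of_norm_bounded hG'.hasSum hF
    _ ≤ K * ((∑' i, weightedAbs τ b i) * (√(∑' i, weightedAbs (t / 2) a i ^ 2)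
          * √(∑' i, weightedAbs (t / 2) w i ^ 2))) := by
        rw [tsum_mul_left]; exact mul_le_mul_of_nonneg_left hGle hK
    _ ≤ K * (embConst * hsNorm σ b * (hsNorm t a * hsNorm t w)) := by
        gcongr
        · exact mul_nonneg (sqrt_nonneg _) (sqrt_nonneg _)
        · exact hsNorm_nonneg _ _
        · exact sqrt_tsum_weightedAbs_sq_le ha (by linarith)
        · exact sqrt_tsum_weightedAbs_sq_le hw (by linarith)
    _ = _ := by ring

lemma summable_and_abs_hsInner_mul_D1_le {t σ : ℝ} (ht : 0 ≤ t) {c η w : FC} (hc : memHs t c)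
    (hη : memHs σ η) (hσ : t + 2 ≤ σ) (hw : memHs t w) :
    Summable (fun k => (wt t k : ℂ) * (mul c (D1 η) k * starRingEnd ℂ (w k))) ∧
      |hsInner t (mul c (D1 η)) w|
        ≤ 2 ^ (t / 2) * embConst * hsNorm σ η * (hsNorm t c * hsNorm t w) := by
  have hF : ∀ p : ℤ × ℤ, ‖innerMulTerm t c (D1 η) w p‖ ≤ 2 ^ (t / 2)
      * (weightedAbs (t / 2 + 1 / 2) η (p.1 - p.2) * weightedAbs (t / 2) c p.2
        * weightedAbs (t / 2) w p.1) := fun p =>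
    (norm_innerMulTerm_le ht _ _ _ p).trans <| mul_le_mul_of_nonneg_left
      (mul_le_mul_of_nonneg_right (mul_le_mul_of_nonneg_right (weightedAbs_D1_le _ _ _)
        (weightedAbs_nonneg _ _ _)) (weightedAbs_nonneg _ _ _)) (by positivity)
  obtain ⟨hsum, hle⟩ := summable_and_norm_tsum_le_of_norm_le (by positivity) hη (by linarith)
    hc hw hF
  have hS := hasSum_of_summable_innerMulTerm hsum
  refine ⟨hS.summable, ?_⟩
  rw [hsInner, hS.tsum_eq]
  exact (Complex.abs_re_le_norm _).trans hle

lemma innerMulTerm_add_conj_swap {t : ℝ} {v w : FC} (hv : isReal v) (k j : ℤ) :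
    innerMulTerm t (D1 w) v w (k, j) + starRingEnd ℂ (innerMulTerm t (D1 w) v w (j, k))
      = Complex.I * (((j : ℝ) * wt t k - k * wt t j : ℝ) : ℂ)
        * (v (k - j) * w j * starRingEnd ℂ (w k)) := by
  have hvconj : starRingEnd ℂ (v (j - k)) = v (k - j) := by
    rw [← neg_sub, hv, Complex.conj_conj]
  simp only [innerMulTerm, D1, map_mul, Complex.conj_conj, Complex.conj_I, map_intCast,
    Complex.conj_ofReal, hvconj]
  push_cast
  ring

lemma summable_and_abs_hsInner_mul_D1_self_le {t σ : ℝ} (ht : 1 ≤ t) {v w : FC}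
    (hrv : isReal v) (hv : memHs σ v) (hσ : t + 2 ≤ σ) (hw : memHs (t + 1) w) :
    Summable (fun k => (wt t k : ℂ) * (mul v (D1 w) k * starRingEnd ℂ (w k))) ∧
      |hsInner t (mul v (D1 w)) w|
        ≤ (2 * t + 1) * 2 ^ (t / 2) * embConst / 2 * hsNorm σ v * (hsNorm t w * hsNorm t w) := by
  set F := innerMulTerm t (D1 w) v w
  have hwt : memHs t w := hw.mono (by linarith)
  obtain ⟨hF, -⟩ := summable_and_norm_tsum_le_of_norm_le (by positivity) hv (by linarith)
    hw.D1 hwt (norm_innerMulTerm_le (by linarith) _ _ _)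
  have hS := hasSum_of_summable_innerMulTerm hF
  rw [FC.mul_comm v]
  refine ⟨hS.summable, ?_⟩
  set S := ∑' p, F p
  -- `S + conj S` only sees the antisymmetric part of the symbol, which puts no derivative on `w`
  have hH : HasSum (fun p : ℤ × ℤ => F p + starRingEnd ℂ (F p.swap)) (S + starRingEnd ℂ S) :=
    hF.hasSum.add (Complex.hasSum_conj'.2 ((Equiv.prodComm ℤ ℤ).hasSum_iff.2 hF.hasSum))
  have hHle : ∀ p : ℤ × ℤ, ‖F p + starRingEnd ℂ (F p.swap)‖ ≤ (2 * t + 1) * 2 ^ (t / 2)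
      * (weightedAbs ((t + 1) / 2) v (p.1 - p.2) * weightedAbs (t / 2) w p.2
        * weightedAbs (t / 2) w p.1) := by
    rintro ⟨k, j⟩
    rw [Prod.swap_prod_mk, innerMulTerm_add_conj_swap hrv]
    simp only [norm_mul, Complex.norm_I, one_mul, Complex.norm_real, norm_eq_abs, RCLike.norm_conj]
    refine (mul_le_mul_of_nonneg_right (abs_mul_wt_sub_mul_wt_le ht k j)
      (by positivity)).trans_eq ?_
    simp only [weightedAbs]
    ring
  obtain ⟨-, hle⟩ := summable_and_norm_tsum_le_of_norm_le (by positivity) hv (by linarith)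
    hwt hwt hHle
  rw [hH.tsum_eq, Complex.add_conj, Complex.norm_real, norm_eq_abs, abs_mul, abs_two] at hle
  rw [hsInner, hS.tsum_eq]
  linarith

end FC

open FC in
/-- Let `s > 11/2`.  There is `C = C(s) > 0` such that for all
`u, v ∈ H^s(𝕋)` and `η, ρ ∈ H^{s-1}(𝕋)`:
`|(v ∂ₓρ − u ∂ₓη, η − ρ)_{H^{s-3}}|`
`≤ C (‖v‖_{H^s} ‖η−ρ‖²_{H^{s-3}} + ‖η‖²_{H^{s-1}} ‖u−v‖²_{H^{s-3}} + ‖η−ρ‖²_{H^{s-3}})`. -/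
theorem statement10 (s : ℝ) (hs : 11 / 2 < s) :
    ∃ C > (0 : ℝ), ∀ u v η ρ : FC,
      FC.memHs s u → FC.memHs s v → FC.memHs (s - 1) η → FC.memHs (s - 1) ρ →
      FC.isReal u → FC.isReal v → FC.isReal η → FC.isReal ρ →
      |FC.hsInner (s - 3) (FC.mul v (FC.D1 ρ) - FC.mul u (FC.D1 η)) (η - ρ)|
        ≤ C * (FC.hsNorm s v * FC.hsNorm (s - 3) (η - ρ) ^ 2
            + FC.hsNorm (s - 1) η ^ 2 * FC.hsNorm (s - 3) (u - v) ^ 2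
            + FC.hsNorm (s - 3) (η - ρ) ^ 2) := by
  have ht : 1 ≤ s - 3 := by linarith
  have hE := embConst_nonneg
  refine ⟨(2 * (s - 3) + 1) * 2 ^ ((s - 3) / 2) * embConst / 2 + 2 ^ ((s - 3) / 2) * embConst + 1,
    by positivity, fun u v η ρ hu hv hη hρ _ hrv _ _ => ?_⟩
  have hw : memHs (s - 1) (η - ρ) := hη.sub hρ
  obtain ⟨hAsum, hA⟩ := summable_and_abs_hsInner_mul_D1_self_le ht hrv hv (by linarith)
    (hw.mono (by linarith))
  obtain ⟨hBsum, hB⟩ := summable_and_abs_hsInner_mul_D1_le (t := s - 3) (by linarith)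
    ((hu.sub hv).mono (by linarith)) hη (by linarith) (hw.mono (by linarith))
  rw [mul_D1_sub_mul_D1 (hu.mono (by linarith)) (hv.mono (by linarith)) (hη.mono (by linarith))
    (hρ.mono (by linarith)), hsInner_neg_sub hAsum hBsum]
  exact abs_neg_sub_le_of_abs_le (by positivity) (by positivity) (hsNorm_nonneg _ _) hA hB
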